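/- arXiv:1009.2009 — 2 statements merged into one kernel-verified Lean document; each statement's English description precedes it below -/
import Mathlib

section
/- In the semi-Markov model, for any fixed time t with 1 ≤ t ≤ T, the partition function decomposes according to the unique segment covering t: Z = Σ_{s ∈ S} Σ_{i=1}^{t} Σ_{j=t}^{T} M(s,i,j), where M(s,i,j) denotes the sum of Φ[ζ] over all segmentations ζ of [1,T] having a segment with state s spanning exactly [i,j]. -/
/-- A segmentation of an interval is encoded as a nonempty list of pairs
(state, positive segment length).  `segPhi R A t0 ζ` is the joint potential of
the segmentation `ζ` of an interval starting at time `t0 + 1`: the product of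
the segment potentials `R s (t_{k-1}+1) t_k` over all segments and of the
transition potentials `A s_k s_{k+1} t_k` over consecutive segments. -/
noncomputable def segPhi {S : Type*} (R : S → ℕ → ℕ → ℝ) (A : S → S → ℕ → ℝ) :
    ℕ → List (S × ℕ) → ℝ
  | _, [] => 1
  | t0, [(s, l)] => R s (t0 + 1) (t0 + l)
  | t0, (s, l) :: (s', l') :: rest =>
      R s (t0 + 1) (t0 + l) * A s s' (t0 + l) *
        segPhi R A (t0 + l) ((s', l') :: rest)

/-- `IsSegmentation a b ζ` : the list `ζ` of (state, length) pairs is a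
segmentation of the interval `[a, b]`: it is nonempty, all segment lengths are
positive, and the lengths sum to `b - a + 1`. -/
def IsSegmentation {S : Type*} (a b : ℕ) (ζ : List (S × ℕ)) : Prop :=
  ζ ≠ [] ∧ (∀ p ∈ ζ, 0 < p.2) ∧ (ζ.map Prod.snd).sum = b + 1 - a

/-- `HasSegment s i j t0 ζ` : the segmentation `ζ` of an interval starting at
time `t0 + 1` contains a segment with state `s` spanning exactly `[i, j]`. -/
def HasSegment {S : Type*} (s : S) (i j : ℕ) : ℕ → List (S × ℕ) → Prop
  | _, [] => False
  | t0, (s', l) :: rest =>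
      (s' = s ∧ t0 + 1 = i ∧ t0 + l = j) ∨ HasSegment s i j (t0 + l) rest

/-- `segMass R A T s i j` : the sum of the joint potentials of all segmentations
of `[1, T]` having a segment with state `s` spanning exactly `[i, j]`. -/
noncomputable def segMass {S : Type*} (R : S → ℕ → ℕ → ℝ) (A : S → S → ℕ → ℝ)
    (T : ℕ) (s : S) (i j : ℕ) : ℝ :=
  ∑ᶠ ζ ∈ {ζ : List (S × ℕ) | IsSegmentation 1 T ζ ∧ HasSegment s i j 0 ζ},
    segPhi R A 0 ζ

/-! The segment covering a fixed time `t` exists and is unique, so the segmentations of `[1, T]`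
are partitioned by the triple `(s, i, j)` of that segment, with `i ≤ t ≤ j`; summing `Φ` over
each block of the partition gives `M(s, i, j)`. -/

theorem List.finite_setOf_length_le_of_forall_mem {α : Type*} {s : Set α} (hs : s.Finite)
    (n : ℕ) : {l : List α | l.length ≤ n ∧ ∀ x ∈ l, x ∈ s}.Finite := by
  have := hs.to_subtype
  refine ((List.finite_length_le s n).image (List.map Subtype.val)).subset ?_
  rintro l ⟨hlen, hmem⟩
  exact ⟨l.pmap Subtype.mk hmem, by simpa using hlen, by simp [List.map_pmap]⟩

section Segmentation

variable {S : Type*}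

theorem finite_setOf_isSegmentation [Finite S] (a b : ℕ) :
    {ζ : List (S × ℕ) | IsSegmentation a b ζ}.Finite := by
  refine (List.finite_setOf_length_le_of_forall_mem
    (Set.finite_univ.prod (Set.finite_Iic (b + 1 - a))) (b + 1 - a)).subset ?_
  rintro ζ ⟨-, hpos, hsum⟩
  refine ⟨?_, fun p hp => ⟨trivial, ?_⟩⟩
  · rw [← hsum, ← List.length_map (f := Prod.snd)]
    refine List.length_le_sum_of_one_le _ fun n hn => ?_
    obtain ⟨p, hp, rfl⟩ := List.mem_map.mp hn
    exact hpos p hp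
  · rw [← hsum]
    exact List.le_sum_of_mem (List.mem_map_of_mem (f := Prod.snd) hp)

theorem HasSegment.bounds {s : S} {i j : ℕ} :
    ∀ {t0 : ℕ} {ζ : List (S × ℕ)}, HasSegment s i j t0 ζ →
      t0 < i ∧ j ≤ t0 + (ζ.map Prod.snd).sum
  | _, [], h => h.elim
  | t0, (_, l) :: rest, h => by
    rcases h with ⟨-, rfl, rfl⟩ | h
    · simp
    · have := h.bounds
      simp only [List.map_cons, List.sum_cons]
      omega

theorem exists_hasSegment_covering {t : ℕ} :
    ∀ {t0 : ℕ} {ζ : List (S × ℕ)}, t0 < t → t ≤ t0 + (ζ.map Prod.snd).sum →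
      ∃ s i j, i ≤ t ∧ t ≤ j ∧ HasSegment s i j t0 ζ
  | _, [], h1, h2 => by simp only [List.map_nil, List.sum_nil] at h2; omega
  | t0, (s, l) :: rest, h1, h2 => by
    by_cases hc : t ≤ t0 + l
    · exact ⟨s, t0 + 1, t0 + l, h1, hc, Or.inl ⟨rfl, rfl, rfl⟩⟩
    · simp only [List.map_cons, List.sum_cons] at h2
      obtain ⟨s', i, j, hi, hj, h⟩ :=
        exists_hasSegment_covering (t := t) (t0 := t0 + l) (ζ := rest) (by omega) (by omega)
      exact ⟨s', i, j, hi, hj, Or.inr h⟩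

theorem HasSegment.eq_of_covering {t : ℕ} {s s' : S} {i j i' j' : ℕ} :
    ∀ {t0 : ℕ} {ζ : List (S × ℕ)}, HasSegment s i j t0 ζ → HasSegment s' i' j' t0 ζ →
      i ≤ t → t ≤ j → i' ≤ t → t ≤ j' → s = s' ∧ i = i' ∧ j = j'
  | _, [], h, _, _, _, _, _ => h.elim
  | _, _ :: _, h, h', hi, hj, hi', hj' => by
    rcases h with ⟨rfl, rfl, rfl⟩ | h <;> rcases h' with ⟨rfl, rfl, rfl⟩ | h'
    · exact ⟨rfl, rfl, rfl⟩
    · have := h'.bounds.1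
      omega
    · have := h.bounds.1
      omega
    · exact h.eq_of_covering h' hi hj hi' hj'

variable [Fintype S] {T t : ℕ}

theorem setOf_isSegmentation_eq_biUnion_hasSegment (ht1 : 1 ≤ t) (htT : t ≤ T) :
    {ζ : List (S × ℕ) | IsSegmentation 1 T ζ} =
      ⋃ x ∈ ((Finset.univ ×ˢ Finset.Icc 1 t ×ˢ Finset.Icc t T : Finset (S × ℕ × ℕ)) :
          Set (S × ℕ × ℕ)),
        {ζ | IsSegmentation 1 T ζ ∧ HasSegment x.1 x.2.1 x.2.2 0 ζ} := by
  ext ζ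
  simp only [Set.mem_ofPred_eq, Set.mem_iUnion, Finset.mem_coe, Finset.mem_product,
    Finset.mem_univ, Finset.mem_Icc, true_and, exists_prop, Prod.exists]
  refine ⟨fun hζ => ?_, fun ⟨_, _, _, _, hζ, _⟩ => hζ⟩
  have hsum : (ζ.map Prod.snd).sum = T := by simpa using hζ.2.2
  obtain ⟨s, i, j, hi, hj, h⟩ := exists_hasSegment_covering (t0 := 0) (ζ := ζ) (t := t)
    (by omega) (by omega)
  have := h.bounds
  exact ⟨s, i, j, ⟨⟨by omega, hi⟩, hj, by omega⟩, hζ, h⟩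

theorem pairwiseDisjoint_setOf_hasSegment :
    ((Finset.univ ×ˢ Finset.Icc 1 t ×ˢ Finset.Icc t T : Finset (S × ℕ × ℕ)) :
        Set (S × ℕ × ℕ)).PairwiseDisjoint
      fun x => {ζ : List (S × ℕ) | IsSegmentation 1 T ζ ∧ HasSegment x.1 x.2.1 x.2.2 0 ζ} := by
  rintro ⟨s, i, j⟩ hx ⟨s', i', j'⟩ hx' hne
  simp only [Finset.coe_product, Set.mem_prod, Finset.coe_Icc, Set.mem_Icc] at hx hx'
  refine Set.disjoint_left.mpr fun ζ hζ hζ' => hne ?_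
  obtain ⟨rfl, rfl, rfl⟩ := hζ.2.eq_of_covering hζ'.2 hx.2.1.2 hx.2.2.1 hx'.2.1.2 hx'.2.2.1
  rfl

end Segmentation

theorem semiCRF_partition_function_decomposition_general {S : Type*} [Fintype S]
    (T : ℕ)
    (R : S → ℕ → ℕ → ℝ) (A : S → S → ℕ → ℝ)
    (t : ℕ) (ht1 : 1 ≤ t) (htT : t ≤ T) :
    (∑ᶠ ζ ∈ {ζ : List (S × ℕ) | IsSegmentation 1 T ζ}, segPhi R A 0 ζ) =
      ∑ s : S, ∑ i ∈ Finset.Icc 1 t, ∑ j ∈ Finset.Icc t T, segMass R A T s i j := by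
  rw [setOf_isSegmentation_eq_biUnion_hasSegment ht1 htT,
    finsum_mem_biUnion pairwiseDisjoint_setOf_hasSegment (Finset.finite_toSet _)
      fun _ _ => (finite_setOf_isSegmentation 1 T).subset fun _ h => h.1,
    finsum_mem_coe_finset, Finset.sum_product, Finset.sum_congr rfl fun _ _ => Finset.sum_product ..]
  rfl

/-- For any fixed time `t` with `1 ≤ t ≤ T`, the partition function of the
semi-Markov model decomposes according to the unique segment covering `t`:
`Z = Σ_{s} Σ_{i=1}^{t} Σ_{j=t}^{T} M(s,i,j)`. -/
theorem semiCRF_partition_function_decomposition {S : Type*} [Fintype S] [Nonempty S]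
    (T : ℕ) (hT : 1 ≤ T)
    (R : S → ℕ → ℕ → ℝ) (A : S → S → ℕ → ℝ)
    (t : ℕ) (ht1 : 1 ≤ t) (htT : t ≤ T) :
    (∑ᶠ ζ ∈ {ζ : List (S × ℕ) | IsSegmentation 1 T ζ}, segPhi R A 0 ζ) =
      ∑ s : S, ∑ i ∈ Finset.Icc 1 t, ∑ j ∈ Finset.Icc t T, segMass R A T s i j :=
  semiCRF_partition_function_decomposition_general T R A t ht1 htT
end

section
/- In the semi-Markov model with maximum segment length L ≥ 1, the length-bounded forward mass satisfies: for every j with 1 ≤ j ≤ T and every s ∈ S, α^L_j(s) = Σ_{i = max(2, j−L+1)}^{j} Σ_{s' ∈ S} α^L_{i-1}(s') · A(s',s,i-1) · R(s,i,j) + (if j ≤ L then R(s,1,j) else 0), where α^L_j(s) is the sum of Φ[ζ] over segmentations ζ of [1,j] whose last segment has state s and all of whose segments have length at most L. -/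
/-- The length-bounded forward mass `α^L_j(s)`: the sum of the joint potentials
of all segmentations of `[1, j]` whose last segment has state `s` and all of
whose segments have length at most `L`. -/
noncomputable def fwdMassBounded {S : Type*} (R : S → ℕ → ℕ → ℝ) (A : S → S → ℕ → ℝ)
    (L : ℕ) (j : ℕ) (s : S) : ℝ :=
  ∑ᶠ ζ ∈ {ζ : List (S × ℕ) |
      IsSegmentation 1 j ζ ∧ Option.map Prod.fst ζ.getLast? = some s ∧
        ∀ p ∈ ζ, p.2 ≤ L},
    segPhi R A 0 ζ

open Finset

theorem Set.Finite.lists_length_le {α : Type*} {T : Set α} (hT : T.Finite) (n : ℕ) :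
    {l : List α | l.length ≤ n ∧ ∀ x ∈ l, x ∈ T}.Finite := by
  have := hT.to_subtype
  refine ((List.finite_length_le T n).image (List.map Subtype.val)).subset ?_
  rintro l ⟨hlen, hmem⟩
  lift l to List T using hmem
  exact ⟨l, by simpa using hlen, rfl⟩

section BoundedSegs

variable {S : Type*} {L n : ℕ} {s : S} {ζ : List (S × ℕ)}

def boundedSegs (L n : ℕ) (s : S) : Set (List (S × ℕ)) :=
  {ζ | IsSegmentation 1 n ζ ∧ Option.map Prod.fst ζ.getLast? = some s ∧ ∀ p ∈ ζ, p.2 ≤ L}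

theorem pos_of_mem_boundedSegs (h : ζ ∈ boundedSegs L n s) : 0 < n := by
  obtain ⟨⟨hne, hpos, hsum⟩, -, -⟩ := h
  obtain ⟨p, hp⟩ := List.exists_mem_of_ne_nil ζ hne
  have := List.le_sum_of_mem (List.mem_map_of_mem (f := Prod.snd) hp)
  have := hpos p hp
  omega

theorem boundedSegs_finite [Finite S] (L n : ℕ) (s : S) : (boundedSegs L n s).Finite := by
  refine ((Set.finite_univ.prod (Set.finite_Iic n)).lists_length_le n).subset ?_
  rintro ζ ⟨⟨-, hpos, hsum⟩, -, -⟩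
  have hsum : (ζ.map Prod.snd).sum = n := by simpa using hsum
  refine ⟨?_, fun p hp ↦ ⟨trivial, ?_⟩⟩
  · simpa [hsum] using List.length_le_sum_of_one_le (ζ.map Prod.snd) fun _ hx ↦ by
      obtain ⟨p, hp, rfl⟩ := List.mem_map.1 hx
      exact hpos p hp
  · exact hsum ▸ List.le_sum_of_mem (List.mem_map_of_mem (f := Prod.snd) hp)

theorem singleton_mem_boundedSegs_iff {t : S} {l : ℕ} :
    [(t, l)] ∈ boundedSegs L n s ↔ t = s ∧ l = n ∧ 0 < n ∧ n ≤ L := by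
  simp only [boundedSegs, IsSegmentation, Set.mem_ofPred_eq, List.forall_mem_singleton, List.getLast?_singleton, Option.map_some, Option.some_inj, List.map_cons, List.map_nil, List.sum_singleton, ne_eq, List.cons_ne_nil, not_false_eq_true, true_and, add_tsub_cancel_right]
  grind

theorem append_singleton_mem_boundedSegs_iff (hζ : ζ ≠ []) {t : S} {l : ℕ} :
    ζ ++ [(t, l)] ∈ boundedSegs L n s ↔
      t = s ∧ 0 < l ∧ l ≤ L ∧ ∃ s', ζ ∈ boundedSegs L (n - l) s' := by
  constructor
  · rintro ⟨⟨-, hpos, hsum⟩, hlast, hle⟩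
    simp only [List.forall_mem_append, List.forall_mem_singleton] at hpos hle
    simp only [List.getLast?_concat, Option.map_some, Option.some.injEq] at hlast
    simp only [List.map_append, List.map_cons, List.map_nil, List.sum_append, List.sum_cons,
      List.sum_nil, add_zero, add_tsub_cancel_right] at hsum
    exact ⟨hlast, hpos.2, hle.2, (ζ.getLast hζ).1, ⟨hζ, hpos.1, by rw [add_tsub_cancel_right]; omega⟩,
      by simp [List.getLast?_eq_some_getLast hζ], hle.1⟩
  · rintro ⟨rfl, hl, hlL, s', hmem⟩
    have := pos_of_mem_boundedSegs hmem
    obtain ⟨⟨-, hpos, hsum⟩, -, hle⟩ := hmem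
    refine ⟨⟨by simp, ?_, ?_⟩, by simp, ?_⟩
    · exact List.forall_mem_append.2 ⟨hpos, List.forall_mem_singleton.2 hl⟩
    · simp only [add_tsub_cancel_right, List.map_append, List.map_cons, List.map_nil,
        List.sum_append, List.sum_cons, List.sum_nil, add_zero] at hsum ⊢
      omega
    · exact List.forall_mem_append.2 ⟨hle, List.forall_mem_singleton.2 hlL⟩

theorem append_mem_boundedSegs {i : ℕ} (hi : i ∈ Icc (max 2 (n + 1 - L)) n) {s' : S}
    (hζ : ζ ∈ boundedSegs L (i - 1) s') : ζ ++ [(s, n + 1 - i)] ∈ boundedSegs L n s := by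
  rw [mem_Icc, max_le_iff] at hi
  rw [append_singleton_mem_boundedSegs_iff hζ.1.1]
  exact ⟨rfl, by omega, by omega, s', by rwa [show n - (n + 1 - i) = i - 1 by omega]⟩

theorem exists_append_eq_of_mem_boundedSegs (h : ζ ∈ boundedSegs L n s) (hlen : ζ.length ≠ 1) :
    ∃ i ∈ Icc (max 2 (n + 1 - L)) n, ∃ s', ∃ ζ' ∈ boundedSegs L (i - 1) s',
      ζ' ++ [(s, n + 1 - i)] = ζ := by
  obtain rfl | ⟨ζ', ⟨t, l⟩, rfl⟩ := ζ.eq_nil_or_concat'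
  · exact absurd rfl h.1.1
  have hζ' : ζ' ≠ [] := by rintro rfl; exact hlen rfl
  obtain ⟨rfl, hl, hlL, s', hmem⟩ := (append_singleton_mem_boundedSegs_iff hζ').1 h
  have := pos_of_mem_boundedSegs hmem
  refine ⟨n + 1 - l, ?_, s', ζ', ?_, ?_⟩
  · rw [mem_Icc, max_le_iff]; omega
  · rwa [show n + 1 - l - 1 = n - l by omega]
  · rw [show n + 1 - (n + 1 - l) = l by omega]

end BoundedSegs

section Potential

variable {S : Type*} (R : S → ℕ → ℕ → ℝ) (A : S → S → ℕ → ℝ)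

theorem segPhi_append_singleton (s : S) (l : ℕ) :
    ∀ (t0 : ℕ) (ζ : List (S × ℕ)) (hζ : ζ ≠ []),
      segPhi R A t0 (ζ ++ [(s, l)]) =
        segPhi R A t0 ζ * A (ζ.getLast hζ).1 s (t0 + (ζ.map Prod.snd).sum) *
          R s (t0 + (ζ.map Prod.snd).sum + 1) (t0 + (ζ.map Prod.snd).sum + l)
  | _, [], h => absurd rfl h
  | t0, [(a, m)], _ => by simp [segPhi, add_assoc]
  | t0, (a, m) :: (b, k) :: rest, _ => by
      rw [List.cons_append, List.cons_append, segPhi, ← List.cons_append,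
        segPhi_append_singleton s l (t0 + m) ((b, k) :: rest) (List.cons_ne_nil _ _), segPhi]
      simp only [List.getLast_cons_cons, List.map_cons, List.sum_cons, add_assoc]
      ring

theorem segPhi_append_of_mem_boundedSegs {L n : ℕ} {s : S} {ζ : List (S × ℕ)}
    (h : ζ ∈ boundedSegs L n s) (t : S) (l : ℕ) :
    segPhi R A 0 (ζ ++ [(t, l)]) = segPhi R A 0 ζ * A s t n * R t (n + 1) (n + l) := by
  obtain ⟨⟨hne, -, hsum⟩, hlast, -⟩ := h
  rw [List.getLast?_eq_some_getLast hne, Option.map_some, Option.some_inj] at hlast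
  rw [segPhi_append_singleton R A t l 0 ζ hne, hlast, zero_add, hsum, Nat.add_sub_cancel]

end Potential

section ForwardMass

variable {S : Type*} (R : S → ℕ → ℕ → ℝ) (A : S → S → ℕ → ℝ) {L n : ℕ} {s : S}

theorem fwdMassBounded_eq_sum [Finite S] (L n : ℕ) (s : S) :
    fwdMassBounded R A L n s = ∑ ζ ∈ (boundedSegs_finite L n s).toFinset, segPhi R A 0 ζ :=
  finsum_mem_eq_finite_toFinset_sum _ _

theorem sum_filter_length_eq_one_segPhi [Finite S] (hn : 1 ≤ n) :
    ∑ ζ ∈ (boundedSegs_finite L n s).toFinset with ζ.length = 1, segPhi R A 0 ζ =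
      if n ≤ L then R s 1 n else 0 := by
  split_ifs with hnL
  · have : {ζ ∈ (boundedSegs_finite L n s).toFinset | ζ.length = 1} = {[(s, n)]} := by
      ext ζ
      simp only [mem_filter, Set.Finite.mem_toFinset, List.length_eq_one_iff, mem_singleton]
      constructor
      · rintro ⟨h, ⟨t, l⟩, rfl⟩
        obtain ⟨rfl, rfl, -⟩ := singleton_mem_boundedSegs_iff.1 h
        rfl
      · rintro rfl
        exact ⟨singleton_mem_boundedSegs_iff.2 ⟨rfl, rfl, hn, hnL⟩, _, rfl⟩
    rw [this, sum_singleton, segPhi, zero_add, zero_add]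
  · refine sum_eq_zero fun ζ hζ ↦ ?_
    rw [mem_filter, Set.Finite.mem_toFinset, List.length_eq_one_iff] at hζ
    obtain ⟨h, ⟨t, l⟩, rfl⟩ := hζ
    exact absurd (singleton_mem_boundedSegs_iff.1 h).2.2.2 hnL

theorem sum_filter_length_ne_one_eq_sum_append [Fintype S] {M : Type*} [AddCommMonoid M]
    (g : List (S × ℕ) → M) :
    ∑ ζ ∈ (boundedSegs_finite L n s).toFinset with ¬ζ.length = 1, g ζ =
      ∑ i ∈ Icc (max 2 (n + 1 - L)) n, ∑ s' : S,
        ∑ ζ ∈ (boundedSegs_finite L (i - 1) s').toFinset, g (ζ ++ [(s, n + 1 - i)]) := by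
  rw [← sum_product' (f := fun i s' ↦ ∑ ζ ∈ (boundedSegs_finite L (i - 1) s').toFinset,
    g (ζ ++ [(s, n + 1 - i)])), sum_sigma']
  symm
  refine sum_nbij (fun x ↦ x.2 ++ [(s, n + 1 - x.1.1)]) ?_ ?_ ?_ fun _ _ ↦ rfl
  · rintro ⟨⟨i, s'⟩, ζ⟩ hx
    simp only [mem_sigma, mem_product, mem_univ, and_true, Set.Finite.mem_toFinset] at hx
    rw [mem_filter, Set.Finite.mem_toFinset, List.length_append, List.length_singleton]
    exact ⟨append_mem_boundedSegs hx.1 hx.2, by simpa using hx.2.1.1⟩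
  · rintro ⟨⟨i₁, s₁⟩, ζ₁⟩ hx₁ ⟨⟨i₂, s₂⟩, ζ₂⟩ hx₂ h
    simp only [coe_sigma, Set.mem_sigma_iff, coe_product, Set.mem_prod, mem_coe, mem_Icc,
      mem_univ, and_true, Set.Finite.mem_toFinset] at hx₁ hx₂
    obtain ⟨rfl, hlast⟩ := List.append_inj' h rfl
    obtain rfl : s₁ = s₂ := Option.some_injective _ (hx₁.2.2.1.symm.trans hx₂.2.2.1)
    obtain rfl : i₁ = i₂ := by
      simp only [List.cons.injEq, Prod.mk.injEq, and_true, true_and] at hlast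
      omega
    rfl
  · intro ζ hζ
    rw [mem_coe, mem_filter, Set.Finite.mem_toFinset] at hζ
    obtain ⟨i, hi, s', ζ', hζ', rfl⟩ := exists_append_eq_of_mem_boundedSegs hζ.1 hζ.2
    exact ⟨⟨(i, s'), ζ'⟩, mem_sigma.2 ⟨mem_product.2 ⟨hi, mem_univ _⟩, by simpa using hζ'⟩, rfl⟩

theorem sum_filter_length_ne_one_segPhi [Fintype S] :
    ∑ ζ ∈ (boundedSegs_finite L n s).toFinset with ¬ζ.length = 1, segPhi R A 0 ζ =
      ∑ i ∈ Icc (max 2 (n + 1 - L)) n, ∑ s' : S,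
        fwdMassBounded R A L (i - 1) s' * A s' s (i - 1) * R s i n := by
  rw [sum_filter_length_ne_one_eq_sum_append]
  refine sum_congr rfl fun i hi ↦ sum_congr rfl fun s' _ ↦ ?_
  rw [mem_Icc, max_le_iff] at hi
  rw [fwdMassBounded_eq_sum, sum_mul, sum_mul]
  refine sum_congr rfl fun ζ hζ ↦ ?_
  rw [segPhi_append_of_mem_boundedSegs R A ((Set.Finite.mem_toFinset _).1 hζ),
    Nat.sub_add_cancel (by omega), show i - 1 + (n + 1 - i) = n by omega]

end ForwardMass

theorem semiCRF_bounded_forward_recursion_general {S : Type*} [Fintype S]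
    (L : ℕ) (R : S → ℕ → ℕ → ℝ) (A : S → S → ℕ → ℝ)
    (j : ℕ) (hj1 : 1 ≤ j) (s : S) :
    fwdMassBounded R A L j s =
      (∑ i ∈ Finset.Icc (max 2 (j + 1 - L)) j, ∑ s' : S,
          fwdMassBounded R A L (i - 1) s' * A s' s (i - 1) * R s i j)
        + (if j ≤ L then R s 1 j else 0) := by
  rw [fwdMassBounded_eq_sum, ← sum_filter_not_add_sum_filter _ (fun ζ ↦ ζ.length = 1),
    sum_filter_length_ne_one_segPhi, sum_filter_length_eq_one_segPhi R A hj1]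

/-- Length-bounded forward recursion for the semi-Markov model with maximum
segment length `L ≥ 1`: for `1 ≤ j ≤ T` and `s ∈ S`,
`α^L_j(s) = Σ_{i=max(2, j−L+1)}^{j} Σ_{s'} α^L_{i-1}(s') · A(s',s,i-1) · R(s,i,j)
              + (if j ≤ L then R(s,1,j) else 0)`. -/
theorem semiCRF_bounded_forward_recursion {S : Type*} [Fintype S] [Nonempty S]
    (T L : ℕ) (hT : 1 ≤ T) (hL : 1 ≤ L)
    (R : S → ℕ → ℕ → ℝ) (A : S → S → ℕ → ℝ)
    (j : ℕ) (hj1 : 1 ≤ j) (hjT : j ≤ T) (s : S) :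
    fwdMassBounded R A L j s =
      (∑ i ∈ Finset.Icc (max 2 (j + 1 - L)) j, ∑ s' : S,
          fwdMassBounded R A L (i - 1) s' * A s' s (i - 1) * R s i j)
        + (if j ≤ L then R s 1 j else 0) :=
  semiCRF_bounded_forward_recursion_general L R A j hj1 s
end
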